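/- arXiv:1609.08011 — 2 statements merged into one kernel-verified Lean document; each statement's English description precedes it below -/
import Mathlib

section
/- Nonexistence theorem: if θ₁ ∈ (0, π/4), λ < 0, and u is a C² function on [0, θ₁] solving u'' + 2(cos(2θ)/sin(2θ)) u' = λ(u^5 - u) on (0, θ₁) with u > 0 on (0, θ₁), u(0) = α ∈ (0,1), u'(0) = 0, and u(θ₁) = 0, then a contradiction follows; i.e., no such solution exists. -/
/-!
Along a solution of `u'' + c u' = V'(u)` with friction `c ≥ 0`, the energy `u'²/2 - V(u)` is
nonincreasing. Here `c θ = 2 cot 2θ ≥ 0` on `(0, π/4)` and `V(s) = λ (s⁶/6 - s²/2)`, so comparing the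
energy at `θ₁` (where `u = 0`) with that at `0` (where `u' = 0`) gives `u'(θ₁)²/2 ≤ -λ (α⁶/6 - α²/2)`,
whose right-hand side is negative for `λ < 0` and `α ∈ (0, 1)`.
-/

open Real Set

theorem energy_antitoneOn_of_damped {a b : ℝ} {u u' u'' c V V' : ℝ → ℝ}
    (hu : ∀ x ∈ Icc a b, HasDerivAt u (u' x) x)
    (hu' : ∀ x ∈ Icc a b, HasDerivAt u' (u'' x) x)
    (hV : ∀ s, HasDerivAt V (V' s) s)
    (hc : ∀ x ∈ Ioo a b, 0 ≤ c x)
    (hODE : ∀ x ∈ Ioo a b, u'' x + c x * u' x = V' (u x)) :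
    AntitoneOn (fun x => u' x ^ 2 / 2 - V (u x)) (Icc a b) := by
  have hE : ∀ x ∈ Icc a b,
      HasDerivAt (fun x => u' x ^ 2 / 2 - V (u x)) (u' x * u'' x - V' (u x) * u' x) x :=
    fun x hx => ((((hu' x hx).pow 2).div_const 2).fun_sub ((hV (u x)).comp x (hu x hx))).congr_deriv
      (by norm_num; ring)
  refine antitoneOn_of_hasDerivWithinAt_nonpos (f' := fun x => u' x * u'' x - V' (u x) * u' x)
    (convex_Icc a b) (fun x hx => (hE x hx).continuousAt.continuousWithinAt)
    (fun x hx => ?_) (fun x hx => ?_)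
  · exact (hE x (interior_subset hx)).hasDerivWithinAt
  · rw [interior_Icc] at hx
    have hdissipation : u' x * u'' x - V' (u x) * u' x = -(c x * u' x ^ 2) := by
      rw [← hODE x hx]; ring
    rw [hdissipation, neg_nonpos]
    exact mul_nonneg (hc x hx) (sq_nonneg _)

theorem cos_div_sin_nonneg {x : ℝ} (h0 : 0 ≤ x) (h1 : x ≤ π / 2) : 0 ≤ cos x / sin x :=
  div_nonneg (cos_nonneg_of_mem_Icc ⟨by linarith [pi_pos], h1⟩)
    (sin_nonneg_of_nonneg_of_le_pi h0 (by linarith [pi_pos]))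

theorem hasDerivAt_pow_six_div_sub_sq_div (s : ℝ) :
    HasDerivAt (fun s : ℝ => s ^ 6 / 6 - s ^ 2 / 2) (s ^ 5 - s) s :=
  (((hasDerivAt_pow 6 s).div_const 6).fun_sub ((hasDerivAt_pow 2 s).div_const 2)).congr_deriv
    (by norm_num)

theorem pow_six_div_sub_sq_div_neg {s : ℝ} (hs : s ∈ Ioo (0 : ℝ) 1) : s ^ 6 / 6 - s ^ 2 / 2 < 0 := by
  have hs4 : s ^ 4 < 1 := pow_lt_one₀ hs.1.le hs.2 (by norm_num)
  have hs2 : 0 < s ^ 2 := pow_pos hs.1 2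
  nlinarith

theorem stmt_9_general (θ₁ lam α : ℝ) (hθ₁ : θ₁ ∈ Set.Ioo 0 (π/4)) (hlam : lam < 0)
    (hα : α ∈ Set.Ioo (0:ℝ) 1) (u u' u'' : ℝ → ℝ)
    (hu : ∀ θ ∈ Set.Icc 0 θ₁, HasDerivAt u (u' θ) θ)
    (hu' : ∀ θ ∈ Set.Icc 0 θ₁, HasDerivAt u' (u'' θ) θ)
    (hu0 : u 0 = α) (hu'0 : u' 0 = 0) (huθ₁ : u θ₁ = 0)
    (hODE : ∀ θ ∈ Set.Ioo 0 θ₁,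
      u'' θ + 2 * (Real.cos (2*θ) / Real.sin (2*θ)) * u' θ = lam * (u θ^5 - u θ)) :
    False := by
  have hV (s : ℝ) : HasDerivAt (fun s => lam * (s ^ 6 / 6 - s ^ 2 / 2)) (lam * (s ^ 5 - s)) s :=
    (hasDerivAt_pow_six_div_sub_sq_div s).const_mul lam
  have hc : ∀ θ ∈ Ioo 0 θ₁, 0 ≤ 2 * (cos (2 * θ) / sin (2 * θ)) := fun θ hθ =>
    mul_nonneg zero_le_two (cos_div_sin_nonneg (by linarith [hθ.1]) (by linarith [hθ.2, hθ₁.2]))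
  have henergy := energy_antitoneOn_of_damped hu hu' hV hc hODE
    (left_mem_Icc.2 hθ₁.1.le) (right_mem_Icc.2 hθ₁.1.le) hθ₁.1.le
  simp only [hu0, hu'0, huθ₁] at henergy
  nlinarith [pow_six_div_sub_sq_div_neg hα, sq_nonneg (u' θ₁)]

theorem stmt_9 (θ₁ lam α : ℝ) (hθ₁ : θ₁ ∈ Set.Ioo 0 (π/4)) (hlam : lam < 0)
    (hα : α ∈ Set.Ioo (0:ℝ) 1) (u u' u'' : ℝ → ℝ)
    (hu : ∀ θ ∈ Set.Icc 0 θ₁, HasDerivAt u (u' θ) θ)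
    (hu' : ∀ θ ∈ Set.Icc 0 θ₁, HasDerivAt u' (u'' θ) θ)
    (hu''c : ContinuousOn u'' (Set.Icc 0 θ₁))
    (hpos : ∀ θ ∈ Set.Ioo 0 θ₁, 0 < u θ)
    (hu0 : u 0 = α) (hu'0 : u' 0 = 0) (huθ₁ : u θ₁ = 0)
    (hODE : ∀ θ ∈ Set.Ioo 0 θ₁,
      u'' θ + 2 * (Real.cos (2*θ) / Real.sin (2*θ)) * u' θ = lam * (u θ^5 - u θ)) :
    False :=
  stmt_9_general θ₁ lam α hθ₁ hlam hα u u' u'' hu hu' hu0 hu'0 huθ₁ hODE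
end

section
/- Exponential smallness lemma: given δ, κ > 0 and K ∈ ℝ, with μ_ε = K² + κ/ε², A_ε = (1 - e^{2c₂δ})/(2(e^{c₁δ} - e^{(2c₂-c₁)δ})) and B_ε = (1 - e^{2c₁δ})/(2(e^{c₂δ} - e^{(2c₁-c₂)δ})) where c₁ = K + √μ_ε, c₂ = K - √μ_ε, there exist β > 0 and ε₁ > 0 such that A_ε + B_ε < e^{-β/ε} for all ε ∈ (0, ε₁). -/
open Real

noncomputable def c1 (K κ ε : ℝ) : ℝ := K + Real.sqrt (K^2 + κ/ε^2)

noncomputable def c2 (K κ ε : ℝ) : ℝ := K - Real.sqrt (K^2 + κ/ε^2)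

noncomputable def Acoef (K κ δ ε : ℝ) : ℝ :=
  (1 - Real.exp (2 * c2 K κ ε * δ)) /
    (2 * (Real.exp (c1 K κ ε * δ) - Real.exp ((2 * c2 K κ ε - c1 K κ ε) * δ)))

noncomputable def Bcoef (K κ δ ε : ℝ) : ℝ :=
  (1 - Real.exp (2 * c1 K κ ε * δ)) /
    (2 * (Real.exp (c2 K κ ε * δ) - Real.exp ((2 * c1 K κ ε - c2 K κ ε) * δ)))

/-!
Write `s = √μ_ε`, so `c₁ = K + s`, `c₂ = K - s` and `s ≥ √κ / ε`. The two exponentials in each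
denominator differ by the factor `exp (4 s δ) ≥ 2`, so each denominator is, in absolute value, at
least the larger of its two exponentials (for `B_ε` numerator and denominator are both negative). This gives `A_ε ≤ exp (-c₁ δ)` and `B_ε ≤ exp (c₂ δ)`, hence
`A_ε + B_ε ≤ 2 exp ((|K| - s) δ) ≤ 2 exp (|K| δ - √κ δ / ε)`, which is below
`exp (-√κ δ / (2 ε))` once `ε` is small.
-/

lemma div_two_mul_exp_sub_exp_le {u v w z : ℝ} (huv : log 2 ≤ u - v) (hz : z ≤ exp w) :
    z / (2 * (exp u - exp v)) ≤ exp (w - u) := by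
  have h2 : 2 * exp v ≤ exp u :=
    calc 2 * exp v = exp (log 2 + v) := by rw [exp_add, exp_log two_pos]
      _ ≤ exp u := exp_le_exp.mpr (by linarith)
  have hden : exp u ≤ 2 * (exp u - exp v) := by linarith
  have hu := exp_pos u
  calc z / (2 * (exp u - exp v)) ≤ exp w / (2 * (exp u - exp v)) := by
        gcongr; linarith
    _ ≤ exp w / exp u := by gcongr
    _ = exp (w - u) := (exp_sub _ _).symm

/-- `Acoef` is `expRatio c₁ c₂ δ` and `Bcoef` is `expRatio c₂ c₁ δ`. -/
noncomputable def expRatio (a b δ : ℝ) : ℝ :=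
  (1 - exp (2 * b * δ)) / (2 * (exp (a * δ) - exp ((2 * b - a) * δ)))

lemma expRatio_le_exp_neg {a b δ : ℝ} (h : log 2 ≤ 2 * (a - b) * δ) :
    expRatio a b δ ≤ exp (-(a * δ)) := by
  have := div_two_mul_exp_sub_exp_le (u := a * δ) (v := (2 * b - a) * δ) (w := 0)
    (z := 1 - exp (2 * b * δ)) (by linarith) (by rw [exp_zero]; linarith [exp_pos (2 * b * δ)])
  rwa [zero_sub] at this

lemma expRatio_le_exp {a b δ : ℝ} (h : log 2 ≤ 2 * (b - a) * δ) :
    expRatio a b δ ≤ exp (a * δ) := by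
  have := div_two_mul_exp_sub_exp_le (u := (2 * b - a) * δ) (v := a * δ) (w := 2 * b * δ)
    (z := exp (2 * b * δ) - 1) (by linarith) (by linarith)
  rw [show 2 * b * δ - (2 * b - a) * δ = a * δ by ring] at this
  rwa [expRatio, ← neg_div_neg_eq, neg_sub, neg_mul_eq_mul_neg, neg_sub]

lemma Acoef_add_Bcoef_le {K κ δ ε : ℝ} (hδ : 0 ≤ δ)
    (h : log 2 ≤ 4 * √(K ^ 2 + κ / ε ^ 2) * δ) :
    Acoef K κ δ ε + Bcoef K κ δ ε ≤ 2 * exp ((|K| - √(K ^ 2 + κ / ε ^ 2)) * δ) := by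
  set s := √(K ^ 2 + κ / ε ^ 2)
  have hA : Acoef K κ δ ε ≤ exp ((|K| - s) * δ) :=
    calc Acoef K κ δ ε = expRatio (K + s) (K - s) δ := rfl
      _ ≤ exp (-((K + s) * δ)) := expRatio_le_exp_neg (by linarith)
      _ ≤ exp ((|K| - s) * δ) := by
        gcongr; nlinarith [neg_abs_le K]
  have hB : Bcoef K κ δ ε ≤ exp ((|K| - s) * δ) :=
    calc Bcoef K κ δ ε = expRatio (K - s) (K + s) δ := rfl
      _ ≤ exp ((K - s) * δ) := expRatio_le_exp (by linarith)
      _ ≤ exp ((|K| - s) * δ) := by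
        gcongr; linarith [le_abs_self K]
  linarith

lemma sqrt_div_le_sqrt_sq_add_div_sq (K : ℝ) {κ ε : ℝ} (hκ : 0 ≤ κ) (hε : 0 < ε) :
    √κ / ε ≤ √(K ^ 2 + κ / ε ^ 2) := by
  calc √κ / ε = √(κ / ε ^ 2) := by rw [sqrt_div hκ, sqrt_sq hε.le]
    _ ≤ √(K ^ 2 + κ / ε ^ 2) := sqrt_le_sqrt (by nlinarith [sq_nonneg K])

theorem stmt_16 (δ κ K : ℝ) (hδ : 0 < δ) (hκ : 0 < κ) :
    ∃ β > 0, ∃ ε₁ > 0, ∀ ε : ℝ, 0 < ε → ε < ε₁ →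
      Acoef K κ δ ε + Bcoef K κ δ ε < Real.exp (-β/ε) := by
  have hL : 0 < log 2 + |K| * δ := by positivity
  refine ⟨√κ * δ / 2, by positivity, √κ * δ / (2 * (log 2 + |K| * δ)), by positivity, ?_⟩
  intro ε hε hε₁
  set t := √κ * δ / ε
  have hβ : -(√κ * δ / 2) / ε = -(t / 2) := by ring
  have hsmall : log 2 + |K| * δ < t / 2 := by
    rw [lt_div_iff₀ (by positivity)] at hε₁
    rw [lt_div_iff₀ two_pos, lt_div_iff₀ hε]
    linarith
  have hs : t ≤ √(K ^ 2 + κ / ε ^ 2) * δ := by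
    rw [show t = √κ / ε * δ by ring]
    exact mul_le_mul_of_nonneg_right (sqrt_div_le_sqrt_sq_add_div_sq K hκ.le hε) hδ.le
  have ht : 0 < t := by positivity
  calc Acoef K κ δ ε + Bcoef K κ δ ε
      ≤ 2 * exp ((|K| - √(K ^ 2 + κ / ε ^ 2)) * δ) :=
        Acoef_add_Bcoef_le hδ.le (by linarith [mul_nonneg (abs_nonneg K) hδ.le])
    _ = exp (log 2 + (|K| - √(K ^ 2 + κ / ε ^ 2)) * δ) := by rw [exp_add, exp_log two_pos]
    _ < exp (-(√κ * δ / 2) / ε) := by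
        rw [hβ, exp_lt_exp]; linarith
end
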